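/- The right-hand side of the Lanczos equation has Weyl-candidate symmetries (Comment 2). Let n ≥ 3 and let L_{abc} be a continuously differentiable tensor field on flat ℝⁿ with L_{abc} = L_{[ab]c} and L_{ab}^{b} = 0. Define W^{ab}_{cd} by the right-hand side of equation (5): W^{ab}_{cd} = 2 L^{ab}_{[c;d]} + 2 L_{cd}^{[a;b]} − (4/(n−2)) δ^{[a}_{[c} ( L^{b]i}_{d];i} + L_{d]i}^{b];i} ). Then W satisfies W_{abcd} = W_{[ab]cd} = W_{ab[cd]}, W_{abcd} = W_{cdab} and W^a_{bad} = 0; in particular L is a Lanczos potential of the tensor field W so defined. -/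

import Mathlib

open scoped ContDiff

noncomputable section

/-- Partial derivative `∂ᵢ f` of a scalar field on flat `ℝⁿ` (points represented as
`Fin n → ℝ`, standard coordinates) in the `i`-th coordinate direction.  In Cartesian
coordinates on flat space this is the covariant derivative `;i`. -/
def pd {n : ℕ} (i : Fin n) (f : (Fin n → ℝ) → ℝ) : (Fin n → ℝ) → ℝ :=
  fun x => fderiv ℝ f x (Pi.single i 1)

/-- Components `η_{ab}` of the constant diagonal metric with diagonal entries `η a = ±1`;
since the entries are `±1` these coincide with the components `η^{ab}` of the inverse
metric. -/
def gm {n : ℕ} (η : Fin n → ℝ) (a b : Fin n) : ℝ := if a = b then η a else 0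

/-- Antisymmetrization over two index slots. -/
def asym2 {n : ℕ} (T : Fin n → Fin n → ℝ) (a b : Fin n) : ℝ := (T a b - T b a) / 2

/-- Antisymmetrization over three index slots. -/
def asym3 {n : ℕ} (T : Fin n → Fin n → Fin n → ℝ) (a b c : Fin n) : ℝ :=
  (T a b c - T a c b - T b a c + T b c a + T c a b - T c b a) / 6

/-- Simultaneous antisymmetrization over a pair of upper slots and a pair of lower slots. -/
def asym22 {n : ℕ} (T : Fin n → Fin n → Fin n → Fin n → ℝ) (a b c d : Fin n) : ℝ :=
  (T a b c d - T b a c d - T a b d c + T b a d c) / 4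

/-- Simultaneous antisymmetrization over a triple of upper slots and a triple of lower
slots (arguments ordered as `T upper₁ upper₂ upper₃ lower₁ lower₂ lower₃`). -/
def asym33 {n : ℕ} (T : Fin n → Fin n → Fin n → Fin n → Fin n → Fin n → ℝ)
    (a b f c d e : Fin n) : ℝ :=
  asym3 (fun a b f => asym3 (fun c d e => T a b f c d e) c d e) a b f

/-- A Weyl candidate: a 4-tensor field with the index symmetries (3a)–(3d):
antisymmetry in the first and in the second index pair, symmetry under interchange of the
two pairs, vanishing cyclic sum `W_{a[bcd]} = 0`, and vanishing trace `W^a{}_{bad} = 0`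
(the trace being taken with the metric `η`). -/
def WeylCandidate {n : ℕ} (η : Fin n → ℝ)
    (W : (Fin n → ℝ) → Fin n → Fin n → Fin n → Fin n → ℝ) : Prop :=
  (∀ x a b c d, W x a b c d = - W x b a c d) ∧
  (∀ x a b c d, W x a b c d = - W x a b d c) ∧
  (∀ x a b c d, W x a b c d = W x c d a b) ∧
  (∀ x a b c d, asym3 (fun b c d => W x a b c d) b c d = 0) ∧
  (∀ x b d, ∑ a, η a * W x a b a d = 0)

/-- The right-hand side of the Lanczos potential equation (4), in the equivalent fully
lowered form (the free indices `a b`, raised in the paper, are lowered with the invertible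
diagonal metric `η`, which only multiplies each component equation by `η a * η b ≠ 0`).
Each contracted (dummy) index pair carries a factor `η i` coming from the inverse
metric. -/
def rhs4 {n : ℕ} (η : Fin n → ℝ) (L : (Fin n → ℝ) → Fin n → Fin n → Fin n → ℝ)
    (x : Fin n → ℝ) (a b c d : Fin n) : ℝ :=
  -- 2 L^{ab}{}_{[c;d]}
  (pd d (L · a b c) x - pd c (L · a b d) x)
  -- + 2 L_{cd}{}^{[a;b]}
  + (pd b (L · c d a) x - pd a (L · c d b) x)
  -- − (4/(n−2)) δ^{[a}_{[c} ( L^{b]i}{}_{d];i} − L^{b]i}{}_{|i|;d]} + L_{d]i}{}^{b];i} − L_{d]i}{}^{|i|;b]} )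
  - (4 / ((n : ℝ) - 2)) *
      asym22 (fun a b c d =>
        gm η a c *
          ∑ i, η i *
            (pd i (L · b i d) x - pd d (L · b i i) x
              + pd i (L · d i b) x - pd b (L · d i i) x)) a b c d
  -- + (8/((n−2)(n−1))) δ^{a}_{[c} δ^{b}_{d]} L^{ij}{}_{i;j}
  + (8 / (((n : ℝ) - 2) * ((n : ℝ) - 1))) *
      ((gm η a c * gm η b d - gm η a d * gm η b c) / 2) *
      ∑ i, ∑ j, η i * η j * pd j (L · i j i) x

/-- Equation (4): `L` is a Lanczos potential for `W` (fully lowered, equivalent form). -/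
def Eq4 {n : ℕ} (η : Fin n → ℝ)
    (W : (Fin n → ℝ) → Fin n → Fin n → Fin n → Fin n → ℝ)
    (L : (Fin n → ℝ) → Fin n → Fin n → Fin n → ℝ) : Prop :=
  ∀ x a b c d, W x a b c d = rhs4 η L x a b c d

/-- The right-hand side of equation (5) (equation (4) in the Lanczos algebraic gauge
`L_{ab}{}^b = 0`), fully lowered form:
`2 L^{ab}{}_{[c;d]} + 2 L_{cd}{}^{[a;b]} − (4/(n−2)) δ^{[a}_{[c} ( L^{b]i}{}_{d];i} + L_{d]i}{}^{b];i} )`. -/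
def rhs5 {n : ℕ} (η : Fin n → ℝ) (L : (Fin n → ℝ) → Fin n → Fin n → Fin n → ℝ)
    (x : Fin n → ℝ) (a b c d : Fin n) : ℝ :=
  (pd d (L · a b c) x - pd c (L · a b d) x)
  + (pd b (L · c d a) x - pd a (L · c d b) x)
  - (4 / ((n : ℝ) - 2)) *
      asym22 (fun a b c d =>
        gm η a c * ∑ i, η i * (pd i (L · b i d) x + pd i (L · d i b) x)) a b c d

/-- Equation (5). -/
def Eq5 {n : ℕ} (η : Fin n → ℝ)
    (W : (Fin n → ℝ) → Fin n → Fin n → Fin n → Fin n → ℝ)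
    (L : (Fin n → ℝ) → Fin n → Fin n → Fin n → ℝ) : Prop :=
  ∀ x a b c d, W x a b c d = rhs5 η L x a b c d

/-- Constraint (8), fully lowered form:
`W^{[ab}{}_{[cd;e]}{}^{f]} = (1/(n−4)) δ^{[a}_{[c} W^{bf]}{}_{de];i}{}^{i}
 + (2/(n−4)) δ^{[a}_{[c} W^{|i|b}{}_{de];i}{}^{f]} + (2/(n−4)) δ^{[a}_{[c} W^{bf]}{}_{|i|d;e]}{}^{i}
 + (4/((n−3)(n−4))) δ^{[a}_{[c} δ^{b}_{d} W^{f]i}{}_{e]j;i}{}^{j}`. -/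
def Constraint8 {n : ℕ} (η : Fin n → ℝ)
    (W : (Fin n → ℝ) → Fin n → Fin n → Fin n → Fin n → ℝ) : Prop :=
  ∀ x a b f c d e,
    asym33 (fun a b f c d e => pd f (pd e (W · a b c d)) x) a b f c d e =
      (1 / ((n : ℝ) - 4)) *
          asym33 (fun a b f c d e =>
            gm η a c * ∑ i, η i * pd i (pd i (W · b f d e)) x) a b f c d e
      + (2 / ((n : ℝ) - 4)) *
          asym33 (fun a b f c d e =>
            gm η a c * ∑ i, η i * pd f (pd i (W · i b d e)) x) a b f c d e
      + (2 / ((n : ℝ) - 4)) *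
          asym33 (fun a b f c d e =>
            gm η a c * ∑ i, η i * pd i (pd e (W · b f i d)) x) a b f c d e
      + (4 / (((n : ℝ) - 3) * ((n : ℝ) - 4))) *
          asym33 (fun a b f c d e =>
            gm η a c * gm η b d *
              ∑ i, ∑ j, η i * η j * pd j (pd i (W · f i e j)) x) a b f c d e

/-- Constraint (10), fully lowered form:
`W^{[ab}{}_{cd;i}{}^{|i|e]} + 2 W^{[ab}{}_{i[c;d]}{}^{|i|e]}
 + (4/(n−3)) δ^{[a}_{[c} W^{b|i}{}_{d]j;i}{}^{j|e]} = 0`,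
antisymmetrized over the upper indices `a b e` and (where indicated) the lower indices
`c d`. -/
def Constraint10 {n : ℕ} (η : Fin n → ℝ)
    (W : (Fin n → ℝ) → Fin n → Fin n → Fin n → Fin n → ℝ) : Prop :=
  ∀ x a b e c d,
    asym3 (fun a b e =>
      (∑ i, η i * pd e (pd i (pd i (W · a b c d))) x)
      + 2 * asym2 (fun c d =>
            ∑ i, η i * pd e (pd i (pd d (W · a b i c))) x) c d
      + (4 / ((n : ℝ) - 3)) * asym2 (fun c d =>
            gm η a c *
              ∑ i, ∑ j, η i * η j * pd e (pd j (pd i (W · b i d j))) x) c d) a b e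
    = 0

/-
The pair symmetries of the right-hand side of (5) are inherited term by term from
`L_{abc} = -L_{bac}` and from the symmetry of `S_{bd} = L_b{}^i{}_{d;i} + L_d{}^i{}_{b;i}` and
of `δ`. For the trace, the gauge condition together with the antisymmetry makes every trace
`L^a{}_{pa;i}` vanish, so the two derivative terms contract to `S_{bd}`, while the `δ`-term
contracts to `(n - 2) S_{bd} / 4` (the trace of `S` vanishing as well); the factor
`4 / (n - 2)` is exactly what makes these cancel.
-/

open Finset

section PartialDerivative

variable {n : ℕ}

lemma pd_neg (i : Fin n) (f : (Fin n → ℝ) → ℝ) (x : Fin n → ℝ) :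
    pd i (fun y => -f y) x = -pd i f x := by
  simp [pd]

lemma pd_const (i : Fin n) (c : ℝ) (x : Fin n → ℝ) :
    pd i (fun _ => c) x = 0 := by
  simp [pd]

lemma pd_sum_mul {ι : Type*} (s : Finset ι) (i : Fin n) (c : ι → ℝ)
    (f : ι → (Fin n → ℝ) → ℝ) (x : Fin n → ℝ) (hf : ∀ a ∈ s, DifferentiableAt ℝ (f a) x) :
    pd i (fun y => ∑ a ∈ s, c a * f a y) x = ∑ a ∈ s, c a * pd i (f a) x := by
  unfold pd
  rw [fderiv_fun_sum fun a ha => (hf a ha).const_mul (c a), _root_.sum_apply]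
  refine sum_congr rfl fun a ha => ?_
  rw [fderiv_const_mul (hf a ha)]
  rfl

end PartialDerivative

section Metric

variable {n : ℕ} {η : Fin n → ℝ}

lemma gm_comm (a b : Fin n) : gm η a b = gm η b a := by
  rcases eq_or_ne a b with rfl | h
  · rfl
  · simp [gm, h, h.symm]

lemma sum_asym22_gm_mul_apply (hη : ∀ a, η a * η a = 1) (S : Fin n → Fin n → ℝ) (b d : Fin n) :
    ∑ a, η a * asym22 (fun a b c d => gm η a c * S b d) a b a d =
      (((n : ℝ) - 2) * S b d + gm η b d * ∑ a, η a * S a a) / 4 := by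
  simp only [asym22, gm, ↓reduceIte, ite_mul, zero_mul, mul_div_assoc', mul_add, mul_sub,
    ← mul_assoc, hη, one_mul, mul_ite, mul_zero, ← sum_div, sum_add_distrib, sum_sub_distrib,
    sum_const, card_univ, Fintype.card_fin, nsmul_eq_mul, sum_ite_eq, mem_univ, sum_ite_eq',
    sum_ite_irrel, ne_eq, OfNat.ofNat_ne_zero, not_false_eq_true, div_left_inj']
  split_ifs
  · rw [sum_congr rfl fun a _ => mul_right_comm (η a) (η b) (S a a), ← sum_mul]
    ring
  · ring

end Metric

section Lanczos

variable {n : ℕ} {η : Fin n → ℝ} {L : (Fin n → ℝ) → Fin n → Fin n → Fin n → ℝ}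

/-- `S_{bd} = L_b{}^i{}_{d;i} + L_d{}^i{}_{b;i}`, the tensor multiplying `δ` in (5). -/
def symmDiv (η : Fin n → ℝ) (L : (Fin n → ℝ) → Fin n → Fin n → Fin n → ℝ)
    (x : Fin n → ℝ) (b d : Fin n) : ℝ :=
  ∑ i, η i * (pd i (L · b i d) x + pd i (L · d i b) x)

lemma symmDiv_comm (x : Fin n → ℝ) (b d : Fin n) : symmDiv η L x b d = symmDiv η L x d b :=
  sum_congr rfl fun i _ => by rw [add_comm]

lemma rhs5_eq_symmDiv (x : Fin n → ℝ) (a b c d : Fin n) :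
    rhs5 η L x a b c d =
      (pd d (L · a b c) x - pd c (L · a b d) x) + (pd b (L · c d a) x - pd a (L · c d b) x)
        - 4 / ((n : ℝ) - 2) *
          asym22 (fun a b c d => gm η a c * symmDiv η L x b d) a b c d :=
  rfl

lemma rhs5_swap_pairs (x : Fin n → ℝ) (a b c d : Fin n) :
    rhs5 η L x a b c d = rhs5 η L x c d a b := by
  simp only [rhs5_eq_symmDiv, asym22]
  rw [gm_comm c a, gm_comm d a, gm_comm c b, gm_comm d b, symmDiv_comm x d b,
    symmDiv_comm x c b, symmDiv_comm x d a, symmDiv_comm x c a]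
  ring

lemma pd_swap (hL : ∀ x a b c, L x a b c = -L x b a c)
    (i : Fin n) (x : Fin n → ℝ) (a b c : Fin n) :
    pd i (L · a b c) x = -pd i (L · b a c) x := by
  rw [← pd_neg]
  exact congrArg (pd i · x) (funext fun y => hL y a b c)

lemma rhs5_swap_left (hL : ∀ x a b c, L x a b c = -L x b a c)
    (x : Fin n → ℝ) (a b c d : Fin n) :
    rhs5 η L x a b c d = -rhs5 η L x b a c d := by
  simp only [rhs5, asym22]
  rw [pd_swap hL d x b a c, pd_swap hL c x b a d]
  ring

lemma rhs5_swap_right (hL : ∀ x a b c, L x a b c = -L x b a c)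
    (x : Fin n → ℝ) (a b c d : Fin n) :
    rhs5 η L x a b c d = -rhs5 η L x a b d c := by
  simp only [rhs5, asym22]
  rw [pd_swap hL b x d c a, pd_swap hL a x d c b]
  ring

lemma sum_trace_eq_zero (hL : ∀ x a b c, L x a b c = -L x b a c)
    (hgauge : ∀ x a, ∑ b, η b * L x a b b = 0) (y : Fin n → ℝ) (p : Fin n) :
    ∑ a, η a * L y a p a = 0 :=
  calc ∑ a, η a * L y a p a = -∑ a, η a * L y p a a := by
        rw [← sum_neg_distrib]
        exact sum_congr rfl fun a _ => by rw [hL y a p a, mul_neg]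
    _ = 0 := by rw [hgauge y p, neg_zero]

section Gauge

variable {x : Fin n → ℝ}

lemma sum_pd_trace_eq_zero (hL : ∀ x a b c, L x a b c = -L x b a c)
    (hgauge : ∀ x a, ∑ b, η b * L x a b b = 0)
    (hdiff : ∀ a b c, DifferentiableAt ℝ (L · a b c) x) (i p : Fin n) :
    ∑ a, η a * pd i (L · a p a) x = 0 := by
  rw [← pd_sum_mul _ i η _ x fun a _ => hdiff a p a,
    funext (sum_trace_eq_zero hL hgauge · p), pd_const]

lemma sum_symmDiv_diag_eq_zero (hL : ∀ x a b c, L x a b c = -L x b a c)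
    (hgauge : ∀ x a, ∑ b, η b * L x a b b = 0)
    (hdiff : ∀ a b c, DifferentiableAt ℝ (L · a b c) x) :
    ∑ a, η a * symmDiv η L x a a = 0 := by
  simp only [symmDiv, mul_sum]
  rw [sum_comm]
  refine sum_eq_zero fun i _ => ?_
  calc ∑ a, η a * (η i * (pd i (L · a i a) x + pd i (L · a i a) x))
      = 2 * η i * ∑ a, η a * pd i (L · a i a) x := by
        rw [mul_sum]
        exact sum_congr rfl fun a _ => by ring
    _ = 0 := by rw [sum_pd_trace_eq_zero hL hgauge hdiff, mul_zero]

lemma sum_trace_pd_terms_eq_symmDiv (hL : ∀ x a b c, L x a b c = -L x b a c)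
    (hgauge : ∀ x a, ∑ b, η b * L x a b b = 0)
    (hdiff : ∀ a b c, DifferentiableAt ℝ (L · a b c) x) (b d : Fin n) :
    ∑ a, η a * ((pd d (L · a b a) x - pd a (L · a b d) x)
      + (pd b (L · a d a) x - pd a (L · a d b) x)) = symmDiv η L x b d :=
  calc _ = ∑ a, η a * pd d (L · a b a) x + ∑ a, η a * pd b (L · a d a) x
        + ∑ a, η a * (pd a (L · b a d) x + pd a (L · d a b) x) := by
        rw [← sum_add_distrib, ← sum_add_distrib]
        refine sum_congr rfl fun a _ => ?_
        rw [pd_swap hL a x a b d, pd_swap hL a x a d b]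
        ring
    _ = symmDiv η L x b d := by
        rw [sum_pd_trace_eq_zero hL hgauge hdiff, sum_pd_trace_eq_zero hL hgauge hdiff,
          zero_add, zero_add, symmDiv]

lemma sum_rhs5_trace_eq_zero (hn : n ≠ 2) (hη : ∀ a, η a * η a = 1)
    (hL : ∀ x a b c, L x a b c = -L x b a c)
    (hgauge : ∀ x a, ∑ b, η b * L x a b b = 0)
    (hdiff : ∀ a b c, DifferentiableAt ℝ (L · a b c) x) (b d : Fin n) :
    ∑ a, η a * rhs5 η L x a b a d = 0 := by
  have hn' : (n : ℝ) - 2 ≠ 0 := sub_ne_zero.mpr (by exact_mod_cast hn)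
  simp only [rhs5_eq_symmDiv, mul_sub, sum_sub_distrib, mul_left_comm (η _) (4 / _), ← mul_sum]
  rw [sum_trace_pd_terms_eq_symmDiv hL hgauge hdiff, sum_asym22_gm_mul_apply hη,
    sum_symmDiv_diag_eq_zero hL hgauge hdiff]
  field_simp
  ring

end Gauge

end Lanczos

/-- **The right-hand side of the Lanczos equation has Weyl-candidate symmetries
(Comment 2).**  For `C¹` `L` with `L_{abc} = L_{[ab]c}` and `L_{ab}{}^b = 0`, the tensor
field `W` defined by the right-hand side of equation (5) satisfies
`W_{abcd} = W_{[ab]cd} = W_{ab[cd]}`, `W_{abcd} = W_{cdab}` and `W^a{}_{bad} = 0`; in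
particular `L` is a Lanczos potential of this `W`. -/
theorem rhs_of_lanczos_equation_is_weyl_candidate
    (n : ℕ) (hn : 3 ≤ n) (η : Fin n → ℝ) (hη : ∀ i, η i = 1 ∨ η i = -1)
    (L : (Fin n → ℝ) → Fin n → Fin n → Fin n → ℝ)
    (hLC1 : ∀ a b c, ContDiff ℝ 1 (fun x => L x a b c))
    (hLasym : ∀ x a b c, L x a b c = - L x b a c)
    (hgauge : ∀ x a, ∑ b, η b * L x a b b = 0)
    (W : (Fin n → ℝ) → Fin n → Fin n → Fin n → Fin n → ℝ)
    (hWdef : ∀ x a b c d, W x a b c d = rhs5 η L x a b c d) :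
    (∀ x a b c d, W x a b c d = - W x b a c d) ∧
    (∀ x a b c d, W x a b c d = - W x a b d c) ∧
    (∀ x a b c d, W x a b c d = W x c d a b) ∧
    (∀ x b d, ∑ a, η a * W x a b a d = 0) ∧
    Eq5 η W L := by
  obtain rfl : W = rhs5 η L := by
    funext x a b c d
    exact hWdef x a b c d
  have hη' : ∀ a, η a * η a = 1 := fun a => by rcases hη a with h | h <;> simp [h]
  have hdiff : ∀ x a b c, DifferentiableAt ℝ (L · a b c) x := fun x a b c =>
    ((hLC1 a b c).differentiable one_ne_zero).differentiableAt
  exact ⟨rhs5_swap_left hLasym, rhs5_swap_right hLasym, rhs5_swap_pairs,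
    fun x => sum_rhs5_trace_eq_zero (by omega) hη' hLasym hgauge (hdiff x), hWdef⟩
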